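/- Let z̄ be B-stationary for min f(z) s.t. P(z) ∈ D (with f, P continuously differentiable, D closed), assume GGCQ holds at z̄ and the mapping u ⇉ ∇P(z̄)u − T_D(P(z̄)) is metrically subregular at (0,0). Then at least one of the following holds: (i) there exist w ∈ T_D(P(z̄)) and w* ∈ N̂_{T_D(P(z̄))}(w) with ∇f(z̄) + ∇P(z̄)* w* = 0; or (ii) there exists ū with ∇P(z̄)ū ∈ T_D(P(z̄)), ∇P(z̄)ū ∉ Lsp(T_D(P(z̄))), ⟨∇f(z̄), ū⟩ = 0, 0 ∈ ∇f(z̄) + N̂_{T^lin(z̄)}(ū), and T_D(P(z̄)) is not locally polyhedral near ∇P(z̄)ū. -/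

import Mathlib

open Set Filter Topology Metric Pointwise

noncomputable section

abbrev Rd (d : ℕ) := EuclideanSpace ℝ (Fin d)

/-- Tangent (contingent) cone: w such that ∃ t_k ↓ 0, w_k → w with z + t_k w_k ∈ Ω. -/
def tangentConeSeq {E : Type*} [NormedAddCommGroup E] [NormedSpace ℝ E]
    (Ω : Set E) (z : E) : Set E :=
  {w | ∃ t : ℕ → ℝ, ∃ wk : ℕ → E,
    (∀ k, 0 < t k) ∧ Tendsto t atTop (nhds 0) ∧
    Tendsto wk atTop (nhds w) ∧ ∀ k, z + t k • wk k ∈ Ω}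

/-- Regular (Fréchet) normal cone: polar of the tangent cone (empty outside Ω). -/
def regNormal {E : Type*} [NormedAddCommGroup E] [InnerProductSpace ℝ E]
    (Ω : Set E) (z : E) : Set E :=
  {v | z ∈ Ω ∧ ∀ w ∈ tangentConeSeq Ω z, (inner ℝ v w : ℝ) ≤ 0}

/-- Limiting (Mordukhovich) normal cone. -/
def limNormal {E : Type*} [NormedAddCommGroup E] [InnerProductSpace ℝ E]
    (Ω : Set E) (z : E) : Set E :=
  {v | ∃ zk vk : ℕ → E, (∀ k, zk k ∈ Ω) ∧ (∀ k, vk k ∈ regNormal Ω (zk k)) ∧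
    Tendsto zk atTop (nhds z) ∧ Tendsto vk atTop (nhds v)}

/-- Polar cone of a set. -/
def polarCone {E : Type*} [NormedAddCommGroup E] [InnerProductSpace ℝ E]
    (K : Set E) : Set E :=
  {v | ∀ w ∈ K, (inner ℝ v w : ℝ) ≤ 0}

/-- Lsp(C): largest subspace L with C + L ⊆ C (the union of all such subspaces). -/
def Lsp {E : Type*} [NormedAddCommGroup E] [NormedSpace ℝ E] (C : Set E) : Set E :=
  {l | ∃ L : Submodule ℝ E, (∀ c ∈ C, ∀ x ∈ L, c + x ∈ C) ∧ l ∈ L}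

/-- A cone: closed under multiplication by nonnegative scalars. -/
def IsCone {E : Type*} [NormedAddCommGroup E] [NormedSpace ℝ E] (C : Set E) : Prop :=
  ∀ c ∈ C, ∀ t : ℝ, 0 ≤ t → t • c ∈ C

/-- Metric subregularity of a set-valued map M at (z, w) ∈ Gr M. -/
def MetricallySubregular {E F : Type*} [NormedAddCommGroup E] [NormedSpace ℝ E]
    [NormedAddCommGroup F] [NormedSpace ℝ F] (M : E → Set F) (z : E) (w : F) : Prop :=
  w ∈ M z ∧ ∃ κ > (0:ℝ), ∃ U ∈ nhds z, ∀ z' ∈ U,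
    infDist z' {x | w ∈ M x} ≤ κ * infDist w (M z')

/-- Convex polyhedral: finite intersection of closed halfspaces. -/
def IsConvexPolyhedral {E : Type*} [NormedAddCommGroup E] [NormedSpace ℝ E]
    (C : Set E) : Prop :=
  ∃ (n : ℕ) (a : Fin n → (E →L[ℝ] ℝ)) (α : Fin n → ℝ), C = {z | ∀ i, a i z ≤ α i}

/-- Polyhedral: finite union of convex polyhedral sets. -/
def IsPolyhedral {E : Type*} [NormedAddCommGroup E] [NormedSpace ℝ E]
    (C : Set E) : Prop :=
  ∃ (n : ℕ) (Ci : Fin n → Set E), (∀ i, IsConvexPolyhedral (Ci i)) ∧ C = ⋃ i, Ci i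

/-- Locally polyhedral near a point. -/
def LocallyPolyhedral {E : Type*} [NormedAddCommGroup E] [NormedSpace ℝ E]
    (Ω : Set E) (z : E) : Prop :=
  ∃ W ∈ nhds z, ∃ C : Set E, IsPolyhedral C ∧ Ω ∩ W = C ∩ W

/-- Normal cone of convex analysis. -/
def convNormal {E : Type*} [NormedAddCommGroup E] [InnerProductSpace ℝ E]
    (K : Set E) (v : E) : Set E :=
  {z | v ∈ K ∧ ∀ w ∈ K, (inner ℝ z (w - v) : ℝ) ≤ 0}

/-- Regular normal cone for subsets of a product of inner product spaces
(with the natural product inner product in the pairing). -/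
def regNormal2 {E F : Type*} [NormedAddCommGroup E] [InnerProductSpace ℝ E]
    [NormedAddCommGroup F] [InnerProductSpace ℝ F] (Ω : Set (E × F)) (z : E × F) :
    Set (E × F) :=
  {v | z ∈ Ω ∧ ∀ w ∈ tangentConeSeq Ω z,
    (inner ℝ v.1 w.1 : ℝ) + (inner ℝ v.2 w.2 : ℝ) ≤ 0}

/-- Iterated tangent cones: the head of the list is the most recent direction,
so `iterTangent D y [vₗ, …, v₁] = T^{l}_D(y; v₁,…,vₗ)`. -/
def iterTangent {E : Type*} [NormedAddCommGroup E] [NormedSpace ℝ E]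
    (D : Set E) (y : E) : List E → Set E
  | [] => tangentConeSeq D y
  | v :: vs => tangentConeSeq (iterTangent D y vs) v

/-!
Write `A = ∇P(z̄)`, `K = T_D(P z̄)` and `g = ∇f(z̄)`. B-stationarity and GGCQ put `-g` in the
polar of `A⁻¹ K`, so `-g = A* y₀` with `⟪y₀, ·⟫ ≤ 0` on `K ∩ range A`. Both sides of the
subregularity estimate are positively homogeneous, so it holds globally,
`dist(u, A⁻¹ K) ≤ κ dist(A u, K)`, and this upgrades the sign condition to
`⟪y₀, x⟫ ≤ M₀ dist(x, range A)` on all of `K`.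

Maximize `⟪y₀, ·⟫` over the part of `K` at distance at most `1` from `range A`. If this slice
is bounded and the maximum is `M`, attained at `w`, then `w` minimizes
`M dist(·, range A) - ⟪y₀, ·⟫` over `K`, and the first order condition at `w` gives
`y ∈ N̂_K(w)` with `y - y₀ ⊥ range A`, i.e. `A* y = -g`: alternative (i). The slice is unbounded
only along critical directions `v ∈ K ∩ range A ∩ y₀^⊥`. Those in the lineality space of `K` are
factored out from the start. At any other one, either `K` is not locally polyhedral, which is
alternative (ii), or near `v` the set `K` is `v + T_K(v)` with `T_K(v)` polyhedral; then pass
to `T_K(v)`, which is invariant under translation by `v`, and a multiplier for it is one for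
`K`. The factored-out subspace grows at each step, so this terminates.
-/

section TangentCone

variable {E : Type*} [NormedAddCommGroup E] [NormedSpace ℝ E]

theorem mem_tangentConeSeq_of_eventually {S : Set E} {x w : E} {t : ℕ → ℝ} {wk : ℕ → E}
    (ht : Tendsto t atTop (𝓝 0)) (hw : Tendsto wk atTop (𝓝 w))
    (h : ∀ᶠ k in atTop, 0 < t k ∧ x + t k • wk k ∈ S) : w ∈ tangentConeSeq S x := by
  obtain ⟨N, hN⟩ := eventually_atTop.1 h
  exact ⟨fun k => t (k + N), fun k => wk (k + N), fun k => (hN _ (Nat.le_add_left N k)).1,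
    ht.comp (tendsto_add_atTop_nat N), hw.comp (tendsto_add_atTop_nat N),
    fun k => (hN _ (Nat.le_add_left N k)).2⟩

theorem tendsto_add_smul_of_tendsto {x w : E} {t : ℕ → ℝ} {wk : ℕ → E}
    (ht : Tendsto t atTop (𝓝 0)) (hw : Tendsto wk atTop (𝓝 w)) :
    Tendsto (fun k => x + t k • wk k) atTop (𝓝 x) := by
  simpa using tendsto_const_nhds.add (ht.smul hw)

theorem zero_mem_tangentConeSeq {S : Set E} {x : E} (hx : x ∈ S) : (0 : E) ∈ tangentConeSeq S x :=
  ⟨fun k => 1 / ((k : ℝ) + 1), fun _ => 0, fun k => by positivity,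
    tendsto_one_div_add_atTop_nhds_zero_nat, tendsto_const_nhds, fun k => by simpa using hx⟩

theorem smul_mem_tangentConeSeq {S : Set E} {x w : E} {c : ℝ} (hc : 0 < c)
    (hw : w ∈ tangentConeSeq S x) : c • w ∈ tangentConeSeq S x := by
  obtain ⟨t, wk, ht0, ht, hw, hS⟩ := hw
  refine ⟨fun k => t k / c, fun k => c • wk k, fun k => div_pos (ht0 k) hc, ?_,
    hw.const_smul c, fun k => ?_⟩
  · simpa using ht.div_const c
  · rw [smul_smul, div_mul_cancel₀ _ hc.ne']
    exact hS k

theorem isCone_tangentConeSeq {S : Set E} {x : E} (hx : x ∈ S) : IsCone (tangentConeSeq S x) := by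
  intro w hw c hc
  rcases hc.eq_or_lt with rfl | hc
  · simpa using zero_mem_tangentConeSeq hx
  · exact smul_mem_tangentConeSeq hc hw

theorem isClosed_tangentConeSeq (S : Set E) (x : E) : IsClosed (tangentConeSeq S x) := by
  refine isSeqClosed_iff_isClosed.1 fun ws w hws hlim => ?_
  choose t wk ht0 ht hw hS using hws
  have key : ∀ m : ℕ, ∃ k, t m k < 1 / ((m : ℝ) + 1) ∧ dist (wk m k) (ws m) < 1 / ((m : ℝ) + 1) :=
    fun m => (((ht m).eventually_lt_const (by positivity)).and
      ((hw m).eventually (ball_mem_nhds _ (by positivity)))).exists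
  choose k hkt hkw using key
  refine ⟨fun m => t m (k m), fun m => wk m (k m), fun m => ht0 m (k m), ?_, ?_,
    fun m => hS m (k m)⟩
  · exact squeeze_zero (fun m => (ht0 m (k m)).le) (fun m => (hkt m).le)
      tendsto_one_div_add_atTop_nhds_zero_nat
  · refine tendsto_iff_dist_tendsto_zero.2 (squeeze_zero (fun _ => dist_nonneg)
      (fun m => (dist_triangle _ (ws m) w).trans (add_le_add_left (hkw m).le _)) ?_)
    simpa using tendsto_one_div_add_atTop_nhds_zero_nat.add
      (tendsto_iff_dist_tendsto_zero.1 hlim)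

theorem tangentConeSeq_mono {S T : Set E} (h : S ⊆ T) (x : E) :
    tangentConeSeq S x ⊆ tangentConeSeq T x := by
  rintro w ⟨t, wk, ht0, ht, hw, hS⟩
  exact ⟨t, wk, ht0, ht, hw, fun k => h (hS k)⟩

theorem tangentConeSeq_congr {S T : Set E} {x : E} (h : S =ᶠ[𝓝 x] T) :
    tangentConeSeq S x = tangentConeSeq T x := by
  suffices ∀ {S T : Set E}, S =ᶠ[𝓝 x] T → tangentConeSeq S x ⊆ tangentConeSeq T x from
    (this h).antisymm (this h.symm)
  rintro S T h w ⟨t, wk, ht0, ht, hw, hS⟩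
  refine mem_tangentConeSeq_of_eventually ht hw ?_
  filter_upwards [tendsto_add_smul_of_tendsto ht hw h] with k hk
  exact ⟨ht0 k, hk.mp (hS k)⟩

theorem tangentConeSeq_preimage_sub (T : Set E) (v x : E) :
    tangentConeSeq ((· - v) ⁻¹' T) (v + x) = tangentConeSeq T x := by
  have h : ∀ y : E, v + x + y - v = x + y := fun y => by abel
  ext w
  constructor <;> rintro ⟨t, wk, ht0, ht, hw, hS⟩ <;> refine ⟨t, wk, ht0, ht, hw, fun k => ?_⟩
  · simpa [h] using hS k
  · simpa [h] using hS k

theorem tangentConeSeq_smul_base {C : Set E} (hC : IsCone C) {x : E} {c : ℝ} (hc : 0 < c) :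
    tangentConeSeq C (c • x) = tangentConeSeq C x := by
  have key : ∀ (y : E) {d : ℝ}, 0 < d → tangentConeSeq C y ⊆ tangentConeSeq C (d • y) := by
    rintro y d hd w ⟨t, wk, ht0, ht, hw, hS⟩
    refine ⟨fun k => d * t k, wk, fun k => mul_pos hd (ht0 k), by simpa using ht.const_mul d,
      hw, fun k => ?_⟩
    rw [mul_smul, ← smul_add]
    exact hC _ (hS k) d hd.le
  refine Subset.antisymm (fun w hw => ?_) (key x hc)
  simpa [smul_smul, inv_mul_cancel₀ hc.ne'] using key (c • x) (inv_pos.2 hc) hw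

theorem add_smul_mem_tangentConeSeq {C : Set E} (hC : IsCone C) {x u : E}
    (hu : u ∈ tangentConeSeq C x) (c : ℝ) : u + c • x ∈ tangentConeSeq C x := by
  obtain ⟨t, wk, ht0, ht, hw, hS⟩ := hu
  have hct : Tendsto (fun k => c * t k) atTop (𝓝 0) := by simpa using ht.const_mul c
  -- `x + t (wk + c x + c t wk) = (1 + c t) (x + t wk)` stays in the cone
  refine mem_tangentConeSeq_of_eventually ht (w := u + c • x)
    (wk := fun k => wk k + c • x + (c * t k) • wk k) ?_ ?_
  · simpa using (hw.add_const (c • x)).add (hct.smul hw)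
  filter_upwards [(hct.const_add 1).eventually_const_lt (by norm_num : (0 : ℝ) < 1 + 0)]
    with k hk
  refine ⟨ht0 k, ?_⟩
  have heq : x + t k • (wk k + c • x + (c * t k) • wk k) = (1 + c * t k) • (x + t k • wk k) := by
    module
  rw [heq]
  exact hC _ (hS k) _ hk.le

theorem add_mem_tangentConeSeq {C : Set E} {S : Submodule ℝ E}
    (hCS : ∀ x ∈ C, ∀ s ∈ S, x + s ∈ C) {x u s : E} (hu : u ∈ tangentConeSeq C x) (hs : s ∈ S) :
    u + s ∈ tangentConeSeq C x := by
  obtain ⟨t, wk, ht0, ht, hw, hC⟩ := hu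
  refine ⟨t, fun k => wk k + s, ht0, ht, hw.add_const s, fun k => ?_⟩
  rw [smul_add, ← add_assoc]
  exact hCS _ (hC k) _ (S.smul_mem _ hs)

theorem tangentConeSeq_subset_of_isCone {C : Set E} (hcl : IsClosed C) (hC : IsCone C) {v : E}
    (hv : ∀ x, v + x ∈ C → x ∈ C) : tangentConeSeq C v ⊆ C := by
  rintro u ⟨t, wk, ht0, -, hw, hS⟩
  refine hcl.mem_of_tendsto hw (Eventually.of_forall fun k => ?_)
  simpa [smul_smul, inv_mul_cancel₀ (ht0 k).ne'] using hC _ (hv _ (hS k)) (t k)⁻¹ (by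
    have := ht0 k; positivity)

theorem subset_tangentConeSeq_zero {C : Set E} (hC : IsCone C) : C ⊆ tangentConeSeq C 0 := by
  intro u hu
  refine ⟨fun k => 1 / ((k : ℝ) + 1), fun _ => u, fun k => by positivity,
    tendsto_one_div_add_atTop_nhds_zero_nat, tendsto_const_nhds, fun k => ?_⟩
  rw [zero_add]
  exact hC u hu _ (by positivity)

theorem tangentConeSeq_zero_of_isCone {C : Set E} (hcl : IsClosed C) (hC : IsCone C) :
    tangentConeSeq C 0 = C :=
  (tangentConeSeq_subset_of_isCone hcl hC (by simp)).antisymm (subset_tangentConeSeq_zero hC)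

theorem tangentConeSeq_subset_posTangentConeAt (S : Set E) (x : E) :
    tangentConeSeq S x ⊆ posTangentConeAt S x := by
  rintro w ⟨t, wk, ht0, ht, hw, hS⟩
  refine mem_tangentConeAt_of_seq atTop (fun k => (t k)⁻¹.toNNReal)
    (fun k => t k • wk k) ?_ (Eventually.of_forall hS) ?_
  · simpa using ht.smul hw
  · refine hw.congr fun k => ?_
    rw [NNReal.smul_def, Real.coe_toNNReal _ (inv_pos.2 (ht0 k)).le, smul_smul,
      inv_mul_cancel₀ (ht0 k).ne', one_smul]

end TangentCone

section Polyhedral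

variable {E : Type*} [NormedAddCommGroup E] [NormedSpace ℝ E]

theorem IsConvexPolyhedral.isClosed {C : Set E} (h : IsConvexPolyhedral C) : IsClosed C := by
  obtain ⟨n, a, α, rfl⟩ := h
  simpa only [Set.ofPred_forall] using isClosed_iInter fun i => isClosed_le (a i).continuous
    continuous_const

theorem IsPolyhedral.isClosed {C : Set E} (h : IsPolyhedral C) : IsClosed C := by
  obtain ⟨n, Ci, hCi, rfl⟩ := h
  exact isClosed_iUnion_of_finite fun i => (hCi i).isClosed

theorem isConvexPolyhedral_empty : IsConvexPolyhedral (∅ : Set E) :=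
  ⟨1, fun _ => 0, fun _ => -1, by ext; simp⟩

theorem IsConvexPolyhedral.exists_eventually_mem_iff {C : Set E} (hC : IsConvexPolyhedral C)
    {v : E} (hv : v ∈ C) :
    ∃ T, IsConvexPolyhedral T ∧ IsCone T ∧ ∀ᶠ y in 𝓝 v, y ∈ C ↔ y - v ∈ T := by
  classical
  obtain ⟨n, a, α, rfl⟩ := hC
  -- only the constraints active at `v` survive in the tangent cone
  let b : Fin n → E →L[ℝ] ℝ := fun j => if a j v = α j then a j else 0
  refine ⟨{u | ∀ j, b j u ≤ 0}, ⟨n, b, 0, rfl⟩, fun u hu c hc j => ?_, ?_⟩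
  · simpa only [map_smul, smul_eq_mul] using mul_nonpos_of_nonneg_of_nonpos hc (hu j)
  have hinactive : ∀ᶠ y in 𝓝 v, ∀ j, a j v < α j → a j y < α j :=
    eventually_all.2 fun j => (em (a j v < α j)).elim
      (fun h => ((a j).continuous.tendsto v |>.eventually_lt_const h).mono fun _ hy _ => hy)
      (fun h => Eventually.of_forall fun _ h' => absurd h' h)
  filter_upwards [hinactive] with y hy
  constructor
  · intro hyC j
    by_cases hj : a j v = α j
    · simpa [b, hj] using hyC j
    · simp [b, hj]
  · intro hyT j
    rcases (hv j).eq_or_lt with hj | hj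
    · have := hyT j
      simp only [b, hj, if_true, map_sub] at this
      linarith
    · exact (hy j hj).le

theorem LocallyPolyhedral.exists_eventuallyEq {K : Set E} {v : E} (h : LocallyPolyhedral K v) :
    ∃ T, IsPolyhedral T ∧ IsCone T ∧ K =ᶠ[𝓝 v] ((· - v) ⁻¹' T) := by
  classical
  obtain ⟨W, hW, -, ⟨n, C, hC, rfl⟩, hKW⟩ := h
  have hpiece : ∀ i, ∃ T, IsConvexPolyhedral T ∧ IsCone T ∧
      ∀ᶠ y in 𝓝 v, y ∈ C i ↔ y - v ∈ T := by
    intro i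
    by_cases hv : v ∈ C i
    · exact (hC i).exists_eventually_mem_iff hv
    · refine ⟨∅, isConvexPolyhedral_empty, fun _ h => h.elim, ?_⟩
      filter_upwards [(hC i).isClosed.isOpen_compl.mem_nhds hv] with y hy
      simpa using hy
  choose T hTpoly hTcone hT using hpiece
  refine ⟨⋃ i, T i, ⟨n, T, hTpoly, rfl⟩, ?_, ?_⟩
  · intro x hx c hc
    obtain ⟨i, hi⟩ := mem_iUnion.1 hx
    exact mem_iUnion.2 ⟨i, hTcone i x hi c hc⟩
  · refine eventuallyEq_set.2 ?_
    filter_upwards [hW, eventually_all.2 hT] with y hyW hy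
    have hyK : y ∈ K ↔ y ∈ ⋃ i, C i := by
      simpa [hyW] using congrArg (y ∈ ·) hKW
    simp only [hyK, mem_iUnion, mem_preimage, hy]

theorem tangentConeSeq_eq_of_eventuallyEq {K T : Set E} {v : E} (hTcl : IsClosed T)
    (hT : IsCone T) (h : K =ᶠ[𝓝 v] ((· - v) ⁻¹' T)) : tangentConeSeq K v = T := by
  have hshift := tangentConeSeq_preimage_sub T v 0
  rw [add_zero] at hshift
  rw [tangentConeSeq_congr h, hshift, tangentConeSeq_zero_of_isCone hTcl hT]

theorem exists_tangentConeSeq_eq_of_eventuallyEq {K T : Set E} {v w : E} (hT : IsCone T)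
    (h : K =ᶠ[𝓝 v] ((· - v) ⁻¹' T)) (hw : w ∈ T) :
    ∃ w' ∈ K, tangentConeSeq K w' = tangentConeSeq T w := by
  have hlim : Tendsto (fun δ : ℝ => v + δ • w) (𝓝[>] 0) (𝓝 v) := by
    refine tendsto_nhdsWithin_of_tendsto_nhds ?_
    simpa using (tendsto_id (x := 𝓝 (0 : ℝ))).smul_const w |>.const_add v
  obtain ⟨δ, hδ, hδpos⟩ :=
    ((hlim.eventually h.eventuallyEq_nhds).and self_mem_nhdsWithin).exists
  have hmem : v + δ • w ∈ K := by
    refine (eventuallyEq_set.1 hδ).self_of_nhds.2 ?_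
    simpa using hT w hw δ hδpos.le
  refine ⟨v + δ • w, hmem, ?_⟩
  rw [tangentConeSeq_congr hδ, tangentConeSeq_preimage_sub,
    tangentConeSeq_smul_base hT hδpos]

end Polyhedral

section Cones

variable {E F : Type*} [NormedAddCommGroup E] [NormedSpace ℝ E]
  [NormedAddCommGroup F] [NormedSpace ℝ F]

theorem IsCone.preimage {C : Set F} (hC : IsCone C) (A : E →L[ℝ] F) : IsCone (A ⁻¹' C) :=
  fun x hx c hc => by simpa using hC _ hx c hc

theorem IsCone.smul_set_eq {C : Set F} (hC : IsCone C) {c : ℝ} (hc : 0 < c) : c • C = C := by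
  refine Subset.antisymm ?_ fun x hx => ⟨c⁻¹ • x, hC x hx _ (inv_nonneg.2 hc.le),
    smul_inv_smul₀ hc.ne' x⟩
  rintro _ ⟨x, hx, rfl⟩
  exact hC x hx c hc.le

theorem IsCone.infDist_smul {C : Set F} (hC : IsCone C) {c : ℝ} (hc : 0 < c) (x : F) :
    infDist (c • x) C = c * infDist x C := by
  conv_lhs => rw [← hC.smul_set_eq hc]
  rw [infDist_smul₀ hc.ne', Real.norm_of_nonneg hc.le]

theorem infDist_zero_setOf_sub_mem {G : Type*} [NormedAddCommGroup G] (K : Set G) (c : G) :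
    infDist 0 {v | c - v ∈ K} = infDist c K := by
  have h : {v | c - v ∈ K} = (c - ·) '' K := by
    ext v
    exact ⟨fun hv => ⟨c - v, hv, sub_sub_cancel c v⟩, by rintro ⟨x, hx, rfl⟩; simpa using hx⟩
  rw [h, ← sub_self c]
  exact infDist_image (Isometry.of_dist_eq fun x y => dist_sub_left c x y)

def linealitySpace (C : Set F) : Submodule ℝ F where
  carrier := {l | ∀ c ∈ C, ∀ t : ℝ, c + t • l ∈ C}
  add_mem' {a b} ha hb c hc t := by
    rw [smul_add, ← add_assoc]
    exact hb _ (ha c hc t) t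
  zero_mem' c hc t := by simpa using hc
  smul_mem' a l hl c hc t := by
    rw [smul_smul]
    exact hl c hc _

theorem Lsp_subset_linealitySpace (C : Set F) : Lsp C ⊆ linealitySpace C := by
  rintro l ⟨L, hL, hl⟩ c hc t
  exact hL c hc _ (L.smul_mem t hl)

theorem add_mem_of_mem_linealitySpace {C : Set F} {c l : F} (hc : c ∈ C)
    (hl : l ∈ linealitySpace C) : c + l ∈ C := by
  simpa using hl c hc 1

theorem exists_infDist_preimage_le {A : E →L[ℝ] F} {K : Set F} (hK : IsCone K)
    (hsub : MetricallySubregular (fun u => {v | A u - v ∈ K}) 0 0) :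
    ∃ κ ≥ 0, ∀ u, infDist u (A ⁻¹' K) ≤ κ * infDist (A u) K := by
  obtain ⟨-, κ, hκ, U, hU, hκU⟩ := hsub
  refine ⟨κ, hκ.le, fun u => ?_⟩
  -- both sides are positively homogeneous, so subregularity near `0` is global
  have hlim : Tendsto (fun c : ℝ => c • u) (𝓝[>] 0) (𝓝 0) :=
    tendsto_nhdsWithin_of_tendsto_nhds (by simpa using (tendsto_id (x := 𝓝 (0 : ℝ))).smul_const u)
  obtain ⟨c, hcU, hc⟩ := ((hlim.eventually hU).and self_mem_nhdsWithin).exists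
  have h := hκU _ hcU
  have hpre : {x | (0 : F) ∈ {v | A x - v ∈ K}} = A ⁻¹' K := by ext; simp
  rw [hpre, infDist_zero_setOf_sub_mem, map_smul, (hK.preimage A).infDist_smul hc,
    hK.infDist_smul hc, mul_left_comm] at h
  exact le_of_mul_le_mul_left h hc

end Cones

section Polar

open RealInnerProductSpace

variable {E F : Type*} [NormedAddCommGroup E] [InnerProductSpace ℝ E]
  [NormedAddCommGroup F] [InnerProductSpace ℝ F]

theorem IsMinOn.nonneg_of_mem_tangentConeSeq {φ : E → ℝ} {φ' : E →L[ℝ] ℝ} {C : Set E} {w u : E}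
    (hmin : IsMinOn φ C w) (hφ : HasFDerivAt φ φ' w) (hu : u ∈ tangentConeSeq C w) : 0 ≤ φ' u :=
  hmin.localize.hasFDerivWithinAt_nonneg hφ.hasFDerivWithinAt
    (tangentConeSeq_subset_posTangentConeAt C w hu)

theorem sub_smul_starProjection_mem_regNormal {C : Set E} (K : Submodule ℝ E)
    [K.HasOrthogonalProjection] {y w : E} (hw : w ∈ C) (hKw : ‖K.starProjection w‖ ≤ 1)
    (hyw : 0 ≤ ⟪y, w⟫) (h : ∀ x ∈ C, ⟪y, x⟫ ≤ ⟪y, w⟫ * ‖K.starProjection x‖) :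
    y - ⟪y, w⟫ • K.starProjection w ∈ regNormal C w := by
  set M := ⟪y, w⟫
  set Q := K.starProjection
  -- `M ‖Q x‖ ≤ M (‖Q x‖² + 1) / 2` with equality at `w`: a smooth majorant that still touches
  have hmin : IsMinOn (fun x => M / 2 * (‖Q x‖ ^ 2 + 1) - ⟪y, x⟫) C w := by
    intro x hx
    have h1 : M * ‖Q x‖ ≤ M / 2 * (‖Q x‖ ^ 2 + 1) := by nlinarith [sq_nonneg (‖Q x‖ - 1)]
    have h2 : M / 2 * (‖Q w‖ ^ 2 + 1) ≤ M := by
      nlinarith [pow_le_one₀ (n := 2) (norm_nonneg (Q w)) hKw]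
    show _ ≤ (_ : ℝ)
    linarith [h x hx]
  have hφ := (((Q.hasFDerivAt (x := w)).norm_sq.add_const 1).const_mul (M / 2)).sub
    (innerSL ℝ y).hasFDerivAt
  refine ⟨hw, fun u hu => ?_⟩
  have h := hmin.nonneg_of_mem_tangentConeSeq hφ hu
  have hQ : ⟪Q w, Q u⟫ = ⟪Q w, u⟫ := by
    rw [← K.inner_starProjection_left_eq_right, ← mul_apply_eq_comp,
      K.isIdempotentElem_starProjection.eq]
  simp only [sub_apply, smul_apply, ContinuousLinearMap.comp_apply, coe_innerSL_apply, hQ,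
    nsmul_eq_mul, Nat.cast_ofNat, smul_eq_mul] at h
  rw [inner_sub_left, real_inner_smul_left]
  linarith

theorem polarCone_tangentConeSeq {C : Set E} {v u : E} (hv : v ∈ polarCone C) (hu : ⟪v, u⟫ = 0) :
    v ∈ polarCone (tangentConeSeq C u) := by
  rintro w ⟨t, wk, ht0, -, hw, hC⟩
  refine le_of_tendsto (tendsto_const_nhds.inner hw) (Eventually.of_forall fun k => ?_)
  have h := hv _ (hC k)
  rw [inner_add_right, hu, zero_add, real_inner_smul_right] at h
  exact nonpos_of_mul_nonpos_right h (ht0 k)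

theorem inner_le_norm_mul_infDist {s : Set E} {v : E} (hs : s.Nonempty) (hv : v ∈ polarCone s)
    (x : E) : ⟪v, x⟫ ≤ ‖v‖ * infDist x s := by
  rcases eq_or_ne v 0 with rfl | hv0
  · simp
  have hpos := norm_pos_iff.2 hv0
  rw [← div_le_iff₀' hpos]
  refine (le_infDist hs).2 fun y hy => ?_
  rw [div_le_iff₀' hpos, dist_eq_norm]
  calc ⟪v, x⟫ = ⟪v, y⟫ + ⟪v, x - y⟫ := by rw [← inner_add_right, add_sub_cancel]
    _ ≤ ‖v‖ * ‖x - y‖ := by linarith [hv y hy, real_inner_le_norm v (x - y)]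

theorem exists_adjoint_eq_of_mem_polarCone [FiniteDimensional ℝ E] [FiniteDimensional ℝ F]
    {A : E →L[ℝ] F} {K : Set F} {v : E} (hK : (0 : F) ∈ K) (hv : v ∈ polarCone (A ⁻¹' K)) :
    ∃ y, ContinuousLinearMap.adjoint A y = v := by
  have hker : v ∈ (LinearMap.ker (A : E →ₗ[ℝ] F))ᗮ := by
    refine (Submodule.mem_orthogonal' _ _).2 fun u hu => ?_
    have hu' : A u = 0 := hu
    refine le_antisymm (hv u (by simpa [hu'] using hK)) ?_
    have := hv (-u) (by simpa [hu'] using hK)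
    rw [inner_neg_right] at this
    linarith
  rw [A.orthogonal_ker, (Submodule.closed_of_finiteDimensional _).submodule_topologicalClosure_eq]
    at hker
  exact hker

theorem adjoint_eq_of_sub_mem_orthogonal_range [CompleteSpace E] [CompleteSpace F]
    {A : E →L[ℝ] F} {y y₀ : F} (h : y - y₀ ∈ (LinearMap.range (A : E →ₗ[ℝ] F))ᗮ) :
    ContinuousLinearMap.adjoint A y = ContinuousLinearMap.adjoint A y₀ := by
  rw [A.orthogonal_range, LinearMap.mem_ker, map_sub, sub_eq_zero] at h
  exact h

end Polar

section DominatedCone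

open RealInnerProductSpace

theorem le_mul_of_forall_mul_le {a q M : ℝ} (hq : 0 ≤ q) (hM : 0 ≤ M)
    (h : ∀ r > 0, r * q ≤ 1 → r * a ≤ M) : a ≤ M * q := by
  rcases hq.eq_or_lt with rfl | hq
  · by_contra! ha
    rw [mul_zero] at ha
    have := h ((M + 1) / a) (by positivity) (by simp)
    rw [div_mul_cancel₀ _ ha.ne'] at this
    linarith
  · have := h q⁻¹ (inv_pos.2 hq) (inv_mul_cancel₀ hq.ne').le
    rwa [inv_mul_le_iff₀ hq, mul_comm] at this

variable {E : Type*} [NormedAddCommGroup E] [InnerProductSpace ℝ E] [FiniteDimensional ℝ E]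
  (L : Submodule ℝ E) (y₀ : E)

def unitSlice (S : Submodule ℝ E) (C : Set E) : Set E :=
  C ∩ Sᗮ ∩ {x | ‖Lᗮ.starProjection x‖ ≤ 1 ∧ 0 ≤ ⟪y₀, x⟫}

variable (M₀ : ℝ)

/-- The cones met along the iterated tangent cones; `S` is the subspace of critical directions
already split off. -/
structure IsDominatedCone (S : Submodule ℝ E) (C : Set E) : Prop where
  isClosed : IsClosed C
  isCone : IsCone C
  zero_mem : (0 : E) ∈ C
  add_mem : ∀ x ∈ C, ∀ s ∈ S, x + s ∈ C
  le_critical : S ≤ L ⊓ (ℝ ∙ y₀)ᗮ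
  inner_le : ∀ x ∈ C, ⟪y₀, x⟫ ≤ M₀ * ‖Lᗮ.starProjection x‖

variable {L y₀ M₀}

theorem isCompact_unitSlice {S : Submodule ℝ E} {C : Set E} (hcl : IsClosed C)
    (hC : IsCone C) (hdom : ∀ x ∈ C, ⟪y₀, x⟫ ≤ M₀ * ‖Lᗮ.starProjection x‖)
    (hZ : ∀ v ∈ C, v ∈ L ⊓ (ℝ ∙ y₀)ᗮ → v ∈ Sᗮ → v = 0) : IsCompact (unitSlice L y₀ S C) := by
  set Q := Lᗮ.starProjection
  have hQcont : Continuous fun x => ‖Q x‖ := continuous_norm.comp Q.continuous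
  have hycont : Continuous fun x => ⟪y₀, x⟫ := continuous_const.inner continuous_id
  -- on the unit directions of the slice the distance to `L` is bounded below
  have hG : IsCompact (C ∩ Sᗮ ∩ {x | 0 ≤ ⟪y₀, x⟫} ∩ sphere 0 1) :=
    (isCompact_sphere 0 1).inter_left <|
      (hcl.inter S.isClosed_orthogonal).inter (isClosed_le continuous_const hycont)
  have hpos : ∀ x ∈ C ∩ Sᗮ ∩ {x | 0 ≤ ⟪y₀, x⟫} ∩ sphere 0 1, 0 < ‖Q x‖ := by
    rintro x ⟨⟨⟨hxC, hxS⟩, hxy⟩, hx1⟩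
    refine (norm_nonneg _).lt_of_ne fun h0 => ?_
    have hxL : x ∈ L := by
      rwa [eq_comm, norm_eq_zero, Submodule.starProjection_apply_eq_zero_iff,
        Submodule.orthogonal_orthogonal] at h0
    have hxy0 : ⟪y₀, x⟫ = 0 := le_antisymm (by simpa [← h0] using hdom x hxC) hxy
    have hx0 := hZ x hxC ⟨hxL, Submodule.mem_orthogonal_singleton_iff_inner_right.2 hxy0⟩ hxS
    simp [hx0] at hx1
  obtain ⟨δ, hδ, hδle⟩ := hG.exists_forall_le' hQcont.continuousOn hpos
  refine Metric.isCompact_of_isClosed_isBounded ((hcl.inter S.isClosed_orthogonal).inter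
    ((isClosed_le hQcont continuous_const).inter (isClosed_le continuous_const hycont)))
    (isBounded_iff_forall_norm_le.2 ⟨δ⁻¹, ?_⟩)
  rintro x ⟨⟨hxC, hxS⟩, hxQ, hxy⟩
  rcases eq_or_ne x 0 with rfl | hx
  · simpa using hδ.le
  have hxpos := norm_pos_iff.2 hx
  have h := hδle (‖x‖⁻¹ • x) ⟨⟨⟨hC _ hxC _ (by positivity), Sᗮ.smul_mem _ hxS⟩,
    by simpa [inner_smul_right] using mul_nonneg (inv_nonneg.2 hxpos.le) hxy⟩,
    by simp [norm_smul, hxpos.ne']⟩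
  rw [map_smul, norm_smul, norm_inv, norm_norm, le_inv_mul_iff₀ hxpos] at h
  rw [← mul_one δ⁻¹, le_inv_mul_iff₀ hδ]
  linarith

theorem inner_le_mul_of_isMaxOn {S : Submodule ℝ E} {C : Set E} {w : E} (hC : IsCone C)
    (hCS : ∀ x ∈ C, ∀ s ∈ S, x + s ∈ C) (hSL : S ≤ L ⊓ (ℝ ∙ y₀)ᗮ) (hw : w ∈ unitSlice L y₀ S C)
    (hmax : IsMaxOn (⟪y₀, ·⟫) (unitSlice L y₀ S C) w) :
    ∀ x ∈ C, ⟪y₀, x⟫ ≤ ⟪y₀, w⟫ * ‖Lᗮ.starProjection x‖ := by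
  intro x hx
  -- removing the `S`-component changes neither `⟪y₀, x⟫` nor the distance to `L`
  set p := S.starProjection x
  have hpS : p ∈ S := S.starProjection_apply_mem x
  have hp := hSL hpS
  have hQ : Lᗮ.starProjection (x - p) = Lᗮ.starProjection x := by
    rw [map_sub, Submodule.starProjection_orthogonal_apply_eq_zero hp.1, sub_zero]
  have hy : ⟪y₀, x - p⟫ = ⟪y₀, x⟫ := by
    rw [inner_sub_right, Submodule.mem_orthogonal_singleton_iff_inner_right.1 hp.2, sub_zero]
  have hxC : x - p ∈ C := by simpa [sub_eq_add_neg] using hCS x hx (-p) (S.neg_mem hpS)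
  refine le_mul_of_forall_mul_le (norm_nonneg _) hw.2.2 fun r hr hrQ => ?_
  by_cases hxy : 0 ≤ ⟪y₀, x - p⟫
  · have hmem : r • (x - p) ∈ unitSlice L y₀ S C :=
      ⟨⟨hC _ hxC _ hr.le, Sᗮ.smul_mem _ (S.sub_starProjection_mem_orthogonal x)⟩,
        by simpa [norm_smul, hQ, abs_of_pos hr] using hrQ,
        by simpa [inner_smul_right] using mul_nonneg hr.le hxy⟩
    simpa [inner_smul_right, hy] using hmax hmem
  · rw [← hy]
    nlinarith [hw.2.2]

namespace IsDominatedCone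

theorem exists_regNormal {S : Submodule ℝ E} {C : Set E} (h : IsDominatedCone L y₀ M₀ S C)
    (hZ : ∀ v ∈ C, v ∈ L ⊓ (ℝ ∙ y₀)ᗮ → v ∈ Sᗮ → v = 0) :
    ∃ w, ∃ y ∈ regNormal C w, y - y₀ ∈ Lᗮ := by
  have h0 : (0 : E) ∈ unitSlice L y₀ S C := ⟨⟨h.zero_mem, Sᗮ.zero_mem⟩, by simp⟩
  obtain ⟨w, hw, hmax⟩ := (isCompact_unitSlice h.isClosed h.isCone h.inner_le hZ).exists_isMaxOn
    ⟨0, h0⟩ (innerSL ℝ y₀).continuous.continuousOn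
  refine ⟨w, _, sub_smul_starProjection_mem_regNormal Lᗮ hw.1.1 hw.2.1 hw.2.2
    (inner_le_mul_of_isMaxOn h.isCone h.add_mem h.le_critical hw hmax), ?_⟩
  rw [sub_sub_cancel_left]
  exact Lᗮ.neg_mem (Lᗮ.smul_mem _ (Lᗮ.starProjection_apply_mem w))

theorem tangentCone {S : Submodule ℝ E} {C : Set E} (h : IsDominatedCone L y₀ M₀ S C)
    {v : E} (hv : v ∈ C) (hvN : v ∈ L ⊓ (ℝ ∙ y₀)ᗮ) :
    IsDominatedCone L y₀ M₀ (S ⊔ ℝ ∙ v) (tangentConeSeq C v) where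
  isClosed := isClosed_tangentConeSeq C v
  isCone := isCone_tangentConeSeq hv
  zero_mem := zero_mem_tangentConeSeq hv
  add_mem x hx s hs := by
    obtain ⟨a, ha, b, hb, rfl⟩ := Submodule.mem_sup.1 hs
    obtain ⟨c, rfl⟩ := Submodule.mem_span_singleton.1 hb
    rw [← add_assoc]
    exact add_smul_mem_tangentConeSeq h.isCone (add_mem_tangentConeSeq h.add_mem hx ha) c
  le_critical := sup_le h.le_critical ((Submodule.span_singleton_le_iff_mem _ _).2 hvN)
  inner_le := by
    -- the dominated region is a closed cone invariant under translation by `v`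
    let D := {x | ⟪y₀, x⟫ ≤ M₀ * ‖Lᗮ.starProjection x‖}
    have hD : IsCone D := fun x hx c hc => by
      change ⟪y₀, c • x⟫ ≤ M₀ * ‖Lᗮ.starProjection (c • x)‖
      rw [inner_smul_right, map_smul, norm_smul, Real.norm_of_nonneg hc, mul_left_comm]
      exact mul_le_mul_of_nonneg_left hx hc
    have hvD : ∀ x, v + x ∈ D → x ∈ D := fun x hx => by
      change ⟪y₀, v + x⟫ ≤ M₀ * ‖Lᗮ.starProjection (v + x)‖ at hx
      rwa [inner_add_right, map_add, Submodule.starProjection_orthogonal_apply_eq_zero hvN.1,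
        Submodule.mem_orthogonal_singleton_iff_inner_right.1 hvN.2, zero_add, zero_add] at hx
    exact (tangentConeSeq_mono h.inner_le v).trans <| tangentConeSeq_subset_of_isCone
      (isClosed_le (continuous_const.inner continuous_id)
        (continuous_const.mul (continuous_norm.comp (Lᗮ.starProjection).continuous))) hD hvD

theorem exists_regNormal_of_locallyPolyhedral {S : Submodule ℝ E} {C : Set E}
    (h : IsDominatedCone L y₀ M₀ S C)
    (hLP : ∀ v ∈ C, v ∈ L ⊓ (ℝ ∙ y₀)ᗮ → v ∈ Sᗮ → v ≠ 0 → LocallyPolyhedral C v) :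
    ∃ w, ∃ y ∈ regNormal C w, y - y₀ ∈ Lᗮ := by
  induction S using WellFoundedGT.induction generalizing C with | _ S ih => ?_
  by_cases hZ : ∀ v ∈ C, v ∈ L ⊓ (ℝ ∙ y₀)ᗮ → v ∈ Sᗮ → v = 0
  · exact h.exists_regNormal hZ
  push Not at hZ
  obtain ⟨v, hv, hvN, hvS, hv0⟩ := hZ
  obtain ⟨T, hTpoly, hTcone, hCT⟩ := (hLP v hv hvN hvS hv0).exists_eventuallyEq
  have hT : tangentConeSeq C v = T :=
    tangentConeSeq_eq_of_eventuallyEq hTpoly.isClosed hTcone hCT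
  have hlt : S < S ⊔ ℝ ∙ v := by
    refine left_lt_sup.2 fun hle => hv0 ?_
    simpa using Submodule.inner_right_of_mem_orthogonal (hle (Submodule.mem_span_singleton_self v))
      hvS
  obtain ⟨w, y, hy, hyy₀⟩ := ih _ hlt (hT ▸ h.tangentCone hv hvN)
    fun x _ _ _ _ => ⟨univ, univ_mem, T, hTpoly, rfl⟩
  obtain ⟨w', hw', hw'T⟩ := exists_tangentConeSeq_eq_of_eventuallyEq hTcone hCT hy.1
  exact ⟨w', y, ⟨hw', hw'T ▸ hy.2⟩, hyy₀⟩

end IsDominatedCone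

end DominatedCone

section Linearization

open RealInnerProductSpace

variable {E F : Type*} [NormedAddCommGroup E] [InnerProductSpace ℝ E] [FiniteDimensional ℝ E]
  [NormedAddCommGroup F] [InnerProductSpace ℝ F] [FiniteDimensional ℝ F]

theorem inner_le_mul_norm_starProjection {A : E →L[ℝ] F} {K : Set F} {y₀ x : F} {κ : ℝ}
    (hκ : 0 ≤ κ) (hK : (0 : F) ∈ K) (hsub : ∀ u, infDist u (A ⁻¹' K) ≤ κ * infDist (A u) K)
    (hy : ContinuousLinearMap.adjoint A y₀ ∈ polarCone (A ⁻¹' K)) (hx : x ∈ K) :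
    ⟪y₀, x⟫ ≤ (‖ContinuousLinearMap.adjoint A y₀‖ * κ + ‖y₀‖) *
      ‖(LinearMap.range (A : E →ₗ[ℝ] F))ᗮ.starProjection x‖ := by
  set Q := (LinearMap.range (A : E →ₗ[ℝ] F))ᗮ.starProjection
  obtain ⟨u, hu⟩ : x - Q x ∈ LinearMap.range (A : E →ₗ[ℝ] F) := by
    simp [Q]
  have hu' : A u = x - Q x := hu
  have h1 : ⟪y₀, A u⟫ ≤ ‖ContinuousLinearMap.adjoint A y₀‖ * infDist u (A ⁻¹' K) := by
    rw [← ContinuousLinearMap.adjoint_inner_left]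
    exact inner_le_norm_mul_infDist ⟨0, by simpa using hK⟩ hy u
  have h2 : infDist (A u) K ≤ ‖Q x‖ :=
    (infDist_le_dist_of_mem hx).trans_eq (by rw [hu', dist_eq_norm, sub_sub_cancel_left, norm_neg])
  calc ⟪y₀, x⟫ = ⟪y₀, A u⟫ + ⟪y₀, Q x⟫ := by rw [hu', ← inner_add_right, sub_add_cancel]
    _ ≤ ‖ContinuousLinearMap.adjoint A y₀‖ * (κ * ‖Q x‖) + ‖y₀‖ * ‖Q x‖ :=
        add_le_add (h1.trans (mul_le_mul_of_nonneg_left ((hsub u).trans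
          (mul_le_mul_of_nonneg_left h2 hκ)) (norm_nonneg _))) (real_inner_le_norm _ _)
    _ = _ := by ring

theorem isDominatedCone_of_infDist_le {A : E →L[ℝ] F} {K : Set F} {y₀ : F} {κ : ℝ}
    (hcl : IsClosed K) (hK : IsCone K) (hK0 : (0 : F) ∈ K) (hκ : 0 ≤ κ)
    (hsub : ∀ u, infDist u (A ⁻¹' K) ≤ κ * infDist (A u) K)
    (hy : ContinuousLinearMap.adjoint A y₀ ∈ polarCone (A ⁻¹' K)) :
    IsDominatedCone (LinearMap.range (A : E →ₗ[ℝ] F)) y₀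
      (‖ContinuousLinearMap.adjoint A y₀‖ * κ + ‖y₀‖)
      (linealitySpace K ⊓ (LinearMap.range (A : E →ₗ[ℝ] F) ⊓ (ℝ ∙ y₀)ᗮ)) K where
  isClosed := hcl
  isCone := hK
  zero_mem := hK0
  add_mem _ hx _ hs := add_mem_of_mem_linealitySpace hx hs.1
  le_critical := inf_le_right
  inner_le _ hx := inner_le_mul_norm_starProjection hκ hK0 hsub hy hx

theorem exists_critical_direction {A : E →L[ℝ] F} {K : Set F} {g : E} {y₀ v : F}
    (hg : -g ∈ polarCone (A ⁻¹' K)) (hy₀ : ContinuousLinearMap.adjoint A y₀ = -g) (hv : v ∈ K)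
    (hvN : v ∈ LinearMap.range (A : E →ₗ[ℝ] F) ⊓ (ℝ ∙ y₀)ᗮ)
    (hvS : v ∈ (linealitySpace K ⊓ (LinearMap.range (A : E →ₗ[ℝ] F) ⊓ (ℝ ∙ y₀)ᗮ))ᗮ)
    (hv0 : v ≠ 0) (hLP : ¬ LocallyPolyhedral K v) :
    ∃ u, A u ∈ K ∧ A u ∉ Lsp K ∧ ⟪g, u⟫ = 0 ∧ -g ∈ regNormal (A ⁻¹' K) u ∧
      ¬ LocallyPolyhedral K (A u) := by
  obtain ⟨u, rfl⟩ := hvN.1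
  have hgu : ⟪g, u⟫ = 0 := by
    have h := Submodule.mem_orthogonal_singleton_iff_inner_right.1 hvN.2
    rw [ContinuousLinearMap.coe_coe, ← ContinuousLinearMap.adjoint_inner_left, hy₀,
      inner_neg_left, neg_eq_zero] at h
    exact h
  refine ⟨u, hv, fun hL => hv0 ?_, hgu, ⟨hv, polarCone_tangentConeSeq hg (by simp [hgu])⟩, hLP⟩
  exact inner_self_eq_zero.1
    (Submodule.inner_right_of_mem_orthogonal
      (Submodule.mem_inf.2 ⟨Lsp_subset_linealitySpace K hL, hvN⟩) hvS)

end Linearization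

theorem stmt17_general {d s : ℕ} (f : Rd d → ℝ)
    (P : Rd d → Rd s) (D : Set (Rd s))
    (Ω : Set (Rd d)) (hΩ : Ω = {x | P x ∈ D}) (z : Rd d) (hz : z ∈ Ω)
    (hBstat : ∀ w ∈ tangentConeSeq Ω z, (0:ℝ) ≤ inner ℝ (gradient f z) w)
    (Tlin : Set (Rd d)) (hTlin : Tlin = {u | fderiv ℝ P z u ∈ tangentConeSeq D (P z)})
    (hGGCQ : regNormal Ω z = polarCone Tlin)
    (hsub : MetricallySubregular
      (fun u => {v : Rd s | fderiv ℝ P z u - v ∈ tangentConeSeq D (P z)}) 0 0) :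
    (∃ w ∈ tangentConeSeq D (P z), ∃ ws ∈ regNormal (tangentConeSeq D (P z)) w,
        gradient f z + ContinuousLinearMap.adjoint (fderiv ℝ P z) ws = 0) ∨
    (∃ u : Rd d, fderiv ℝ P z u ∈ tangentConeSeq D (P z) ∧
        fderiv ℝ P z u ∉ Lsp (tangentConeSeq D (P z)) ∧
        (inner ℝ (gradient f z) u : ℝ) = 0 ∧
        -gradient f z ∈ regNormal Tlin u ∧
        ¬ LocallyPolyhedral (tangentConeSeq D (P z)) (fderiv ℝ P z u)) := by
  subst hTlin
  set A := fderiv ℝ P z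
  set K := tangentConeSeq D (P z)
  set g := gradient f z
  have hPz : P z ∈ D := by rwa [hΩ] at hz
  have hK : IsCone K := isCone_tangentConeSeq hPz
  have hK0 : (0 : Rd s) ∈ K := zero_mem_tangentConeSeq hPz
  have hg : -g ∈ polarCone (A ⁻¹' K) := hGGCQ ▸ ⟨hz, fun w hw => by
    rw [inner_neg_left]
    linarith [hBstat w hw]⟩
  obtain ⟨y₀, hy₀⟩ := exists_adjoint_eq_of_mem_polarCone hK0 hg
  obtain ⟨κ, hκ, hκK⟩ := exists_infDist_preimage_le hK hsub
  have hdom := isDominatedCone_of_infDist_le (isClosed_tangentConeSeq D (P z)) hK hK0 hκ hκK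
    (hy₀ ▸ hg)
  set N := LinearMap.range (A : Rd d →ₗ[ℝ] Rd s) ⊓ (ℝ ∙ y₀)ᗮ
  by_cases hbad : ∃ v ∈ K, v ∈ N ∧ v ∈ (linealitySpace K ⊓ N)ᗮ ∧ v ≠ 0 ∧ ¬ LocallyPolyhedral K v
  · obtain ⟨v, hv, hvN, hvS, hv0, hLP⟩ := hbad
    exact Or.inr (exists_critical_direction hg hy₀ hv hvN hvS hv0 hLP)
  · push Not at hbad
    obtain ⟨w, y, hy, hyy₀⟩ := hdom.exists_regNormal_of_locallyPolyhedral hbad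
    refine Or.inl ⟨w, hy.1, y, hy, ?_⟩
    rw [adjoint_eq_of_sub_mem_orthogonal_range hyy₀, hy₀, add_neg_cancel]

theorem stmt17 {d s : ℕ} (f : Rd d → ℝ) (hf : ContDiff ℝ 1 f)
    (P : Rd d → Rd s) (hP : ContDiff ℝ 1 P) (D : Set (Rd s)) (hD : IsClosed D)
    (Ω : Set (Rd d)) (hΩ : Ω = {x | P x ∈ D}) (z : Rd d) (hz : z ∈ Ω)
    (hBstat : ∀ w ∈ tangentConeSeq Ω z, (0:ℝ) ≤ inner ℝ (gradient f z) w)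
    (Tlin : Set (Rd d)) (hTlin : Tlin = {u | fderiv ℝ P z u ∈ tangentConeSeq D (P z)})
    (hGGCQ : regNormal Ω z = polarCone Tlin)
    (hsub : MetricallySubregular
      (fun u => {v : Rd s | fderiv ℝ P z u - v ∈ tangentConeSeq D (P z)}) 0 0) :
    (∃ w ∈ tangentConeSeq D (P z), ∃ ws ∈ regNormal (tangentConeSeq D (P z)) w,
        gradient f z + ContinuousLinearMap.adjoint (fderiv ℝ P z) ws = 0) ∨
    (∃ u : Rd d, fderiv ℝ P z u ∈ tangentConeSeq D (P z) ∧
        fderiv ℝ P z u ∉ Lsp (tangentConeSeq D (P z)) ∧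
        (inner ℝ (gradient f z) u : ℝ) = 0 ∧
        -gradient f z ∈ regNormal Tlin u ∧
        ¬ LocallyPolyhedral (tangentConeSeq D (P z)) (fderiv ℝ P z u)) :=
  stmt17_general f P D Ω hΩ z hz hBstat Tlin hTlin hGGCQ hsub
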